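/- arXiv:2601.07752 — 2 statements merged into one kernel-verified Lean document; each statement's English description precedes it below -/
import Mathlib

section
/- Let μ be a probability measure on a space X, let α₀ ∈ L²(μ) be the Riesz representer of a bounded linear functional, i.e. for all square-integrable γ, the expectation E[m(W, γ)] = E[α₀(X)·γ(X)]. Then for any candidate α ∈ L²(μ) and any differentiable strictly convex g with g'∘α square-integrable, the expected Bregman divergence E[BD_g(α₀(X) | α(X))] equals E[-g(α(X)) + g'(α(X))·α(X) - m(W, g'∘α)] plus the constant E[g(α₀(X))], which does not depend on α. -/
open MeasureTheory

/-- If `α₀` is the Riesz representer of the linear functional `γ ↦ E[m(W, γ)]`,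
then the expected Bregman divergence `E[BD_g(α₀(X) | α(X))]` equals the
observable objective `E[-g(α(X)) + g'(α(X))·α(X) - m(W, g'∘α)]` plus the
constant `E[g(α₀(X))]`, which does not depend on `α`. -/
theorem expected_bregman_eq_observable_objective
    {Ω 𝒳 : Type*} [MeasurableSpace Ω] [MeasurableSpace 𝒳]
    (P : Measure Ω) [IsProbabilityMeasure P]
    (X : Ω → 𝒳) (m : Ω → (𝒳 → ℝ) → ℝ)
    (α₀ α : 𝒳 → ℝ) (g : ℝ → ℝ)
    (hdiff : Differentiable ℝ g) (hconv : StrictConvexOn ℝ Set.univ g)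
    (hα₀L2 : MemLp (fun ω => α₀ (X ω)) 2 P)
    (hαL2 : MemLp (fun ω => α (X ω)) 2 P)
    (hgαL2 : MemLp (fun ω => deriv g (α (X ω))) 2 P)
    (hRiesz : ∀ γ : 𝒳 → ℝ, ∫ ω, m ω γ ∂P = ∫ ω, α₀ (X ω) * γ (X ω) ∂P)
    (hint0 : Integrable (fun ω => g (α₀ (X ω))) P)
    (hint1 : Integrable (fun ω => g (α (X ω))) P)
    (hint2 : Integrable (fun ω => deriv g (α (X ω)) * α (X ω)) P)
    (hint3 : Integrable (fun ω => deriv g (α (X ω)) * α₀ (X ω)) P)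
    (hint4 : Integrable (fun ω => m ω (deriv g ∘ α)) P) :
    ∫ ω, (g (α₀ (X ω)) - g (α (X ω))
        - deriv g (α (X ω)) * (α₀ (X ω) - α (X ω))) ∂P
      = (∫ ω, (- g (α (X ω)) + deriv g (α (X ω)) * α (X ω)
            - m ω (deriv g ∘ α)) ∂P)
        + ∫ ω, g (α₀ (X ω)) ∂P := by
  have hR := hRiesz (deriv g ∘ α)
  simp only [Function.comp] at hR
  have h1 : (fun ω => g (α₀ (X ω)) - g (α (X ω))
      - deriv g (α (X ω)) * (α₀ (X ω) - α (X ω)))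
      = fun ω => (g (α₀ (X ω)) - g (α (X ω)) - deriv g (α (X ω)) * α₀ (X ω))
        + deriv g (α (X ω)) * α (X ω) := by
    funext ω; ring
  have i1 : Integrable (fun ω => g (α₀ (X ω)) - g (α (X ω))
      - deriv g (α (X ω)) * α₀ (X ω)) P := (hint0.sub hint1).sub hint3
  have i2 : Integrable (fun ω => g (α₀ (X ω)) - g (α (X ω))) P := hint0.sub hint1
  have i3 : Integrable (fun ω => - g (α (X ω)) + deriv g (α (X ω)) * α (X ω)) P :=
    hint1.neg.add hint2
  have i4 : Integrable (fun ω => - g (α (X ω))) P := hint1.neg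
  rw [h1, integral_add i1 hint2, integral_sub i2 hint3, integral_sub hint0 hint1,
    integral_sub i3 hint4, integral_add i4 hint2, integral_neg, hR]
  have h3 : (fun ω => α₀ (X ω) * deriv g (α (X ω)))
      = fun ω => deriv g (α (X ω)) * α₀ (X ω) := by funext ω; rw [mul_comm]
  rw [h3]
  ring
end

section
/- Suppose g is differentiable strictly convex and α* minimizes the population objective BD_g(α) := E[-g(α(X)) + g'(α(X))α(X) - m(W, g'∘α)] over a class A containing the true Riesz representer α₀. Then α* = α₀ μ-almost everywhere (for α₀ the essentially unique minimizer). -/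
/-!
Let `D(a, b) = g a - g b - g'(b) (a - b)` be the Bregman divergence of `g`. Applying the Riesz
identity to `γ = g' ∘ β` replaces `m(W, g' ∘ β)` by `α₀(X) g'(β(X))`, and the objective becomes
`BD_g(β) = E[D(α₀(X), β(X))] - E[g(α₀(X))]`. Minimality of `α*` against `β = α₀` forces
`E[D(α₀(X), α*(X))] ≤ 0`; since `D ≥ 0` with equality only on the diagonal (strict convexity),
`α*(X) = α₀(X)` almost surely, i.e. `α* = α₀` almost everywhere for the law of `X`.
-/

open MeasureTheory

noncomputable section

def bregmanDiv (g : ℝ → ℝ) (a b : ℝ) : ℝ := g a - g b - deriv g b * (a - b)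

@[simp]
lemma bregmanDiv_self (g : ℝ → ℝ) (a : ℝ) : bregmanDiv g a a = 0 := by
  simp [bregmanDiv]

lemma StrictConvexOn.bregmanDiv_pos {g : ℝ → ℝ} {S : Set ℝ} (hconv : StrictConvexOn ℝ S g)
    {a b : ℝ} (ha : a ∈ S) (hb : b ∈ S) (hdiff : DifferentiableAt ℝ g b) (hab : a ≠ b) :
    0 < bregmanDiv g a b := by
  unfold bregmanDiv
  rcases hab.lt_or_gt with hab | hab
  · have hslope := hconv.slope_lt_deriv ha hb hab hdiff
    rw [slope_def_field, div_lt_iff₀ (sub_pos.mpr hab)] at hslope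
    nlinarith
  · have hslope := hconv.deriv_lt_slope hb ha hab hdiff
    rw [slope_def_field, lt_div_iff₀ (sub_pos.mpr hab)] at hslope
    nlinarith

lemma StrictConvexOn.bregmanDiv_eq_zero_iff {g : ℝ → ℝ} {S : Set ℝ}
    (hconv : StrictConvexOn ℝ S g) {a b : ℝ} (ha : a ∈ S) (hb : b ∈ S)
    (hdiff : DifferentiableAt ℝ g b) : bregmanDiv g a b = 0 ↔ a = b := by
  refine ⟨fun h => ?_, fun h => h ▸ bregmanDiv_self g a⟩
  by_contra hab
  exact (hconv.bregmanDiv_pos ha hb hdiff hab).ne' h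

lemma StrictConvexOn.bregmanDiv_nonneg {g : ℝ → ℝ} {S : Set ℝ} (hconv : StrictConvexOn ℝ S g)
    {a b : ℝ} (ha : a ∈ S) (hb : b ∈ S) (hdiff : DifferentiableAt ℝ g b) :
    0 ≤ bregmanDiv g a b := by
  rcases eq_or_ne a b with rfl | hab
  · simp
  · exact (hconv.bregmanDiv_pos ha hb hdiff hab).le

variable {Ω : Type*} [MeasurableSpace Ω] {μ : Measure Ω}

lemma ae_eq_of_integral_bregmanDiv_nonpos {g : ℝ → ℝ} (hdiff : Differentiable ℝ g)
    (hconv : StrictConvexOn ℝ Set.univ g) {a b : Ω → ℝ}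
    (hint : Integrable (fun ω => bregmanDiv g (a ω) (b ω)) μ)
    (hle : ∫ ω, bregmanDiv g (a ω) (b ω) ∂μ ≤ 0) : a =ᵐ[μ] b := by
  have hnonneg : 0 ≤ fun ω => bregmanDiv g (a ω) (b ω) := fun ω =>
    hconv.bregmanDiv_nonneg trivial trivial (hdiff _)
  have hzero : (fun ω => bregmanDiv g (a ω) (b ω)) =ᵐ[μ] 0 :=
    (integral_eq_zero_iff_of_nonneg hnonneg hint).mp (le_antisymm hle (integral_nonneg hnonneg))
  filter_upwards [hzero] with ω hω
  exact (hconv.bregmanDiv_eq_zero_iff trivial trivial (hdiff _)).mp hω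

/-- `L` plays the role of `m(W, g' ∘ β)`, `a` of `α₀(X)` and `b` of `β(X)`. -/
lemma integral_bregmanRiesz_objective_eq {g : ℝ → ℝ} {a b L : Ω → ℝ}
    (hga : Integrable (fun ω => g (a ω)) μ) (hgb : Integrable (fun ω => g (b ω)) μ)
    (hgb' : Integrable (fun ω => deriv g (b ω) * b ω) μ) (hL : Integrable L μ)
    (hD : Integrable (fun ω => bregmanDiv g (a ω) (b ω)) μ)
    (hRiesz : ∫ ω, L ω ∂μ = ∫ ω, a ω * deriv g (b ω) ∂μ) :
    ∫ ω, (- g (b ω) + deriv g (b ω) * b ω - L ω) ∂μ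
      = ∫ ω, bregmanDiv g (a ω) (b ω) ∂μ - ∫ ω, g (a ω) ∂μ := by
  have hcross : Integrable (fun ω => a ω * deriv g (b ω)) μ :=
    (((hga.sub hgb).add hgb').sub hD).congr
      (.of_forall fun ω => by simp only [Pi.add_apply, Pi.sub_apply, bregmanDiv]; ring)
  have hsplit : (fun ω => - g (b ω) + deriv g (b ω) * b ω - L ω)
      = fun ω => (bregmanDiv g (a ω) (b ω) - g (a ω)) + (a ω * deriv g (b ω) - L ω) := by
    funext ω; simp only [bregmanDiv]; ring
  have hfirst : Integrable (fun ω => bregmanDiv g (a ω) (b ω) - g (a ω)) μ := hD.sub hga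
  have hsecond : Integrable (fun ω => a ω * deriv g (b ω) - L ω) μ := hcross.sub hL
  rw [hsplit, integral_add hfirst hsecond, integral_sub hD hga,
    integral_sub hcross hL, hRiesz, sub_self, add_zero]

end

theorem bregman_riesz_population_minimizer_general
    {Ω 𝒳 : Type*} [MeasurableSpace Ω] [MeasurableSpace 𝒳]
    (P : Measure Ω)
    (X : Ω → 𝒳) (hX : Measurable X)
    (m : Ω → (𝒳 → ℝ) → ℝ)
    (α₀ αstar : 𝒳 → ℝ) (hα₀meas : Measurable α₀) (hαsmeas : Measurable αstar)
    (g : ℝ → ℝ)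
    (hdiff : Differentiable ℝ g) (hconv : StrictConvexOn ℝ Set.univ g)
    (hRiesz : ∀ γ : 𝒳 → ℝ, ∫ ω, m ω γ ∂P = ∫ ω, α₀ (X ω) * γ (X ω) ∂P)
    (A : Set (𝒳 → ℝ)) (hα₀A : α₀ ∈ A) (hαsA : αstar ∈ A)
    (hint1 : ∀ β ∈ A, Integrable (fun ω => g (β (X ω))) P)
    (hint2 : ∀ β ∈ A, Integrable (fun ω => deriv g (β (X ω)) * β (X ω)) P)
    (hint3 : ∀ β ∈ A, Integrable (fun ω => m ω (deriv g ∘ β)) P)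
    (hintBD : Integrable (fun ω =>
        g (α₀ (X ω)) - g (αstar (X ω))
          - deriv g (αstar (X ω)) * (α₀ (X ω) - αstar (X ω))) P)
    (hmin : ∀ β ∈ A,
      (∫ ω, (- g (αstar (X ω)) + deriv g (αstar (X ω)) * αstar (X ω)
          - m ω (deriv g ∘ αstar)) ∂P)
        ≤ ∫ ω, (- g (β (X ω)) + deriv g (β (X ω)) * β (X ω)
            - m ω (deriv g ∘ β)) ∂P) :
    ∀ᵐ x ∂(Measure.map X P), αstar x = α₀ x := by
  have objective_eq : ∀ β ∈ A,
      Integrable (fun ω => bregmanDiv g (α₀ (X ω)) (β (X ω))) P →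
      ∫ ω, (- g (β (X ω)) + deriv g (β (X ω)) * β (X ω) - m ω (deriv g ∘ β)) ∂P
        = ∫ ω, bregmanDiv g (α₀ (X ω)) (β (X ω)) ∂P - ∫ ω, g (α₀ (X ω)) ∂P :=
    fun β hβ hD => integral_bregmanRiesz_objective_eq (hint1 α₀ hα₀A) (hint1 β hβ)
      (hint2 β hβ) (hint3 β hβ) hD (hRiesz _)
  have hD_nonpos : ∫ ω, bregmanDiv g (α₀ (X ω)) (αstar (X ω)) ∂P ≤ 0 := by
    have h := hmin α₀ hα₀A
    rw [objective_eq αstar hαsA hintBD, objective_eq α₀ hα₀A (by simp)] at h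
    simpa using h
  have hae : ∀ᵐ ω ∂P, α₀ (X ω) = αstar (X ω) :=
    ae_eq_of_integral_bregmanDiv_nonpos hdiff hconv hintBD hD_nonpos
  rw [ae_map_iff hX.aemeasurable (measurableSet_eq_fun hαsmeas hα₀meas)]
  filter_upwards [hae] with ω hω using hω.symm

/-- If `α*` minimizes the population Bregman–Riesz objective
`BD_g(α) = E[-g(α(X)) + g'(α(X))α(X) - m(W, g'∘α)]` over a class `A`
containing the true Riesz representer `α₀`, then `α* = α₀` almost everywhere
with respect to the distribution of `X`. -/
theorem bregman_riesz_population_minimizer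
    {Ω 𝒳 : Type*} [MeasurableSpace Ω] [MeasurableSpace 𝒳]
    (P : Measure Ω) [IsProbabilityMeasure P]
    (X : Ω → 𝒳) (hX : Measurable X)
    (m : Ω → (𝒳 → ℝ) → ℝ)
    (α₀ αstar : 𝒳 → ℝ) (hα₀meas : Measurable α₀) (hαsmeas : Measurable αstar)
    (g : ℝ → ℝ)
    (hdiff : Differentiable ℝ g) (hconv : StrictConvexOn ℝ Set.univ g)
    (hRiesz : ∀ γ : 𝒳 → ℝ, ∫ ω, m ω γ ∂P = ∫ ω, α₀ (X ω) * γ (X ω) ∂P)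
    (A : Set (𝒳 → ℝ)) (hα₀A : α₀ ∈ A) (hαsA : αstar ∈ A)
    (hint1 : ∀ β ∈ A, Integrable (fun ω => g (β (X ω))) P)
    (hint2 : ∀ β ∈ A, Integrable (fun ω => deriv g (β (X ω)) * β (X ω)) P)
    (hint3 : ∀ β ∈ A, Integrable (fun ω => m ω (deriv g ∘ β)) P)
    (hintBD : Integrable (fun ω =>
        g (α₀ (X ω)) - g (αstar (X ω))
          - deriv g (αstar (X ω)) * (α₀ (X ω) - αstar (X ω))) P)
    (hmin : ∀ β ∈ A,
      (∫ ω, (- g (αstar (X ω)) + deriv g (αstar (X ω)) * αstar (X ω)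
          - m ω (deriv g ∘ αstar)) ∂P)
        ≤ ∫ ω, (- g (β (X ω)) + deriv g (β (X ω)) * β (X ω)
            - m ω (deriv g ∘ β)) ∂P) :
    ∀ᵐ x ∂(Measure.map X P), αstar x = α₀ x :=
  bregman_riesz_population_minimizer_general P X hX m α₀ αstar hα₀meas hαsmeas g hdiff hconv hRiesz
    A hα₀A hαsA hint1 hint2 hint3 hintBD hmin
end
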